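/- Let F be the free group on generators y₀, y₁, y₂ and set y₋₁ = (y₀y₁y₂)⁻¹. Then [[y₀,y₁], [y₀, y₁y₂]] ∉ [[y₋₁, y₀, y₁, y₂]]. (This element corresponds to the homotopy class of the composition S⁴ → S³ → S² of suspended Hopf maps, a generator of π₄(S²) ≅ ℤ/2.) -/

import Mathlib

open scoped commutatorElement

/-- The left-normed (left-ordered) commutator `[a, b₁, b₂, …, b_t] = [[…[[a,b₁],b₂]…],b_t]`,
where `[a,b] = aba⁻¹b⁻¹`. -/
def leftNormedCommutator {G : Type*} [Group G] : G → List G → G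
  | a, [] => a
  | a, b :: l => leftNormedCommutator ⁅a, b⁆ l

/-- The letter `(w i)^ε` for a sign `ε = ±1` (coded by a `Bool`). -/
def signedLetter {G : Type*} [Group G] {ι : Type*} (w : ι → G) : ι × Bool → G
  | (i, true) => w i
  | (i, false) => (w i)⁻¹

/-- The set of all left-normed commutators `[z₁^{ε₁}, …, z_t^{ε_t}]` with `εᵢ = ±1`,
`zᵢ ∈ {w i | i : ι}`, in which every letter `w i` occurs at least once. -/
def fatCommutatorSet {G : Type*} [Group G] {ι : Type*} (w : ι → G) : Set G :=
  { g | ∃ (z : ι × Bool) (l : List (ι × Bool)),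
      (∀ i : ι, i ∈ ((z :: l).map Prod.fst)) ∧
      g = leftNormedCommutator (signedLetter w z) (l.map (signedLetter w)) }

/-- `[[w₁, …, w_k]]`: the normal closure of the set of left-normed commutators with
(signed) entries from `{w i}` in which every `w i` appears at least once. -/
def fatCommutator {G : Type*} [Group G] {ι : Type*} (w : ι → G) : Subgroup G :=
  Subgroup.normalClosure (fatCommutatorSet w)

/-- The family of letters `y₋₁, y₀, …, y_{n-1}` in the free group `F` on `y₀, …, y_{n-1}`,
where `y₋₁ = (y₀ ⋯ y_{n-1})⁻¹`; the index `0 : Fin (n+1)` encodes `y₋₁` and `i+1`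
encodes `yᵢ`. -/
def wuLetter (n : ℕ) : Fin (n + 1) → FreeGroup (Fin n) :=
  Fin.cases ((List.ofFn fun i : Fin n => FreeGroup.of i).prod)⁻¹ fun i => FreeGroup.of i

/-- The generators `y₀, y₁, y₂` of the free group on three letters. -/
abbrev y : Fin 3 → FreeGroup (Fin 3) := FreeGroup.of

/-!
Send `y₀, y₁, y₂` to unitriangular `5 × 5` matrices over `𝔽₂` with suitably chosen
superdiagonals. The unitriangular group `UT₅` is nilpotent of class `4`, so every left-normed
commutator with at least five entries is trivial there. A fat commutator in the four letters
`y₋₁, y₀, y₁, y₂` has at least four entries, and the finitely many with exactly four are checked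
to vanish. Hence `[[y₋₁, y₀, y₁, y₂]]` lies in the kernel, whereas `[[y₀, y₁], [y₀, y₁y₂]]` is
sent to a nontrivial element of the corner.
-/

theorem Fintype.card_le_length_of_forall_mem {ι : Type*} [Fintype ι] [DecidableEq ι] {l : List ι}
    (hl : ∀ i, i ∈ l) : Fintype.card ι ≤ l.length :=
  calc Fintype.card ι = l.toFinset.card := by
        rw [Finset.eq_univ_of_forall fun i => List.mem_toFinset.2 (hl i), Finset.card_univ]
    _ ≤ l.length := List.toFinset_card_le l

section LeftNormedCommutator

variable {G H : Type*} [Group G] [Group H]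

theorem map_leftNormedCommutator (f : G →* H) (a : G) (l : List G) :
    f (leftNormedCommutator a l) = leftNormedCommutator (f a) (l.map f) := by
  induction l generalizing a with
  | nil => rfl
  | cons b l ih => simp only [leftNormedCommutator, List.map_cons, ih, map_commutatorElement]

theorem leftNormedCommutator_mem_lowerCentralSeries {a : G} {n : ℕ}
    (ha : a ∈ (⊤ : Subgroup G).lowerCentralSeries n) (l : List G) :
    leftNormedCommutator a l ∈ (⊤ : Subgroup G).lowerCentralSeries (n + l.length) := by
  induction l generalizing a n with
  | nil => exact ha
  | cons b l ih =>
    rw [List.length_cons, add_comm l.length 1, ← add_assoc]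
    exact ih (a := ⁅a, b⁆) (n := n + 1) (Subgroup.commutator_mem_commutator ha (Subgroup.mem_top b))

theorem leftNormedCommutator_eq_one {n : ℕ}
    (hG : (⊤ : Subgroup G).lowerCentralSeries n = ⊥) (a : G) {l : List G} (hl : n ≤ l.length) :
    leftNormedCommutator a l = 1 := by
  have hmem := leftNormedCommutator_mem_lowerCentralSeries (n := 0) (Subgroup.mem_top a) l
  rw [zero_add] at hmem
  rw [← Subgroup.mem_bot, ← hG]
  exact Subgroup.lowerCentralSeries_antitone _ hl hmem

end LeftNormedCommutator

section FatCommutator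

variable {G H ι : Type*} [Group G] [Group H]

theorem signedLetter_comp (f : G →* H) (w : ι → G) :
    signedLetter (f ∘ w) = f ∘ signedLetter w := by
  funext ⟨i, s⟩
  cases s <;> simp [signedLetter]

theorem fatCommutator_le_comap (f : G →* H) (w : ι → G) :
    fatCommutator w ≤ (fatCommutator (f ∘ w)).comap f := by
  have : ((fatCommutator (f ∘ w)).comap f).Normal :=
    Subgroup.Normal.comap Subgroup.normalClosure_normal f
  refine Subgroup.normalClosure_le_normal ?_
  rintro _ ⟨z, l, hcover, rfl⟩
  refine Subgroup.subset_normalClosure ⟨z, l, hcover, ?_⟩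
  rw [map_leftNormedCommutator, List.map_map, signedLetter_comp]
  rfl

end FatCommutator

/-- `I + N` with `N` strictly upper triangular; `aij` is the `(i, j)` entry. -/
@[ext]
structure UT₅ (R : Type*) where
  a12 : R
  a23 : R
  a34 : R
  a45 : R
  a13 : R
  a24 : R
  a35 : R
  a14 : R
  a25 : R
  a15 : R
deriving DecidableEq

namespace UT₅

variable {R : Type*} [CommRing R]

def one : UT₅ R := ⟨0, 0, 0, 0, 0, 0, 0, 0, 0, 0⟩

def mul (x y : UT₅ R) : UT₅ R :=
  ⟨x.a12 + y.a12, x.a23 + y.a23, x.a34 + y.a34, x.a45 + y.a45,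
   x.a13 + y.a13 + x.a12 * y.a23,
   x.a24 + y.a24 + x.a23 * y.a34,
   x.a35 + y.a35 + x.a34 * y.a45,
   x.a14 + y.a14 + x.a12 * y.a24 + x.a13 * y.a34,
   x.a25 + y.a25 + x.a23 * y.a35 + x.a24 * y.a45,
   x.a15 + y.a15 + x.a12 * y.a25 + x.a13 * y.a35 + x.a14 * y.a45⟩

-- `(I + N)⁻¹ = I - N + N² - N³ + N⁴`
def inv (x : UT₅ R) : UT₅ R :=
  ⟨-x.a12, -x.a23, -x.a34, -x.a45,
   -x.a13 + x.a12 * x.a23,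
   -x.a24 + x.a23 * x.a34,
   -x.a35 + x.a34 * x.a45,
   -x.a14 + x.a12 * x.a24 + x.a13 * x.a34 - x.a12 * x.a23 * x.a34,
   -x.a25 + x.a23 * x.a35 + x.a24 * x.a45 - x.a23 * x.a34 * x.a45,
   -x.a15 + x.a12 * x.a25 + x.a13 * x.a35 + x.a14 * x.a45
     - x.a12 * x.a23 * x.a35 - x.a12 * x.a24 * x.a45 - x.a13 * x.a34 * x.a45
     + x.a12 * x.a23 * x.a34 * x.a45⟩

instance : One (UT₅ R) := ⟨one⟩
instance : Mul (UT₅ R) := ⟨mul⟩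
instance : Inv (UT₅ R) := ⟨inv⟩

theorem one_def : (1 : UT₅ R) = one := rfl
theorem mul_def (x y : UT₅ R) : x * y = mul x y := rfl
theorem inv_def (x : UT₅ R) : x⁻¹ = inv x := rfl

instance : Group (UT₅ R) :=
  Group.ofLeftAxioms
    (fun _ _ _ => by ext <;> simp only [mul_def, mul] <;> ring)
    (fun _ => by ext <;> simp only [mul_def, one_def, mul, one] <;> ring)
    (fun _ => by ext <;> simp only [mul_def, inv_def, one_def, mul, inv, one] <;> ring)

def band₂ : Subgroup (UT₅ R) where
  carrier := {x | x.a12 = 0 ∧ x.a23 = 0 ∧ x.a34 = 0 ∧ x.a45 = 0}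
  one_mem' := by simp [one_def, one]
  mul_mem' := by rintro x y ⟨_, _, _, _⟩ ⟨_, _, _, _⟩; simp_all [mul_def, mul]
  inv_mem' := by rintro x ⟨_, _, _, _⟩; simp_all [inv_def, inv]

def band₃ : Subgroup (UT₅ R) where
  carrier := {x | x.a12 = 0 ∧ x.a23 = 0 ∧ x.a34 = 0 ∧ x.a45 = 0 ∧
    x.a13 = 0 ∧ x.a24 = 0 ∧ x.a35 = 0}
  one_mem' := by simp [one_def, one]
  mul_mem' := by rintro x y ⟨_, _, _, _, _, _, _⟩ ⟨_, _, _, _, _, _, _⟩; simp_all [mul_def, mul]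
  inv_mem' := by rintro x ⟨_, _, _, _, _, _, _⟩; simp_all [inv_def, inv]

def band₄ : Subgroup (UT₅ R) where
  carrier := {x | x.a12 = 0 ∧ x.a23 = 0 ∧ x.a34 = 0 ∧ x.a45 = 0 ∧
    x.a13 = 0 ∧ x.a24 = 0 ∧ x.a35 = 0 ∧ x.a14 = 0 ∧ x.a25 = 0}
  one_mem' := by simp [one_def, one]
  mul_mem' := by
    rintro x y ⟨_, _, _, _, _, _, _, _, _⟩ ⟨_, _, _, _, _, _, _, _, _⟩; simp_all [mul_def, mul]
  inv_mem' := by rintro x ⟨_, _, _, _, _, _, _, _, _⟩; simp_all [inv_def, inv]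

theorem commutator_mem_band₂ (x y : UT₅ R) : ⁅x, y⁆ ∈ band₂ := by
  refine ⟨?_, ?_, ?_, ?_⟩ <;> simp only [commutatorElement_def, mul_def, inv_def, mul, inv] <;> ring

theorem commutator_mem_band₃ {x : UT₅ R} (hx : x ∈ band₂) (y : UT₅ R) : ⁅x, y⁆ ∈ band₃ := by
  obtain ⟨h12, h23, h34, h45⟩ := hx
  refine ⟨?_, ?_, ?_, ?_, ?_, ?_, ?_⟩ <;>
    simp only [commutatorElement_def, mul_def, inv_def, mul, inv, h12, h23, h34, h45] <;> ring

theorem commutator_mem_band₄ {x : UT₅ R} (hx : x ∈ band₃) (y : UT₅ R) : ⁅x, y⁆ ∈ band₄ := by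
  obtain ⟨h12, h23, h34, h45, h13, h24, h35⟩ := hx
  refine ⟨?_, ?_, ?_, ?_, ?_, ?_, ?_, ?_, ?_⟩ <;>
    simp only [commutatorElement_def, mul_def, inv_def, mul, inv,
      h12, h23, h34, h45, h13, h24, h35] <;> ring

theorem commute_of_mem_band₄ {x : UT₅ R} (hx : x ∈ band₄) (y : UT₅ R) : Commute x y := by
  obtain ⟨h12, h23, h34, h45, h13, h24, h35, h14, h25⟩ := hx
  ext <;> simp only [mul_def, mul, h12, h23, h34, h45, h13, h24, h35, h14, h25] <;> ring

theorem lowerCentralSeries_four_eq_bot : (⊤ : Subgroup (UT₅ R)).lowerCentralSeries 4 = ⊥ := by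
  have h₁ : (⊤ : Subgroup (UT₅ R)).lowerCentralSeries 1 ≤ band₂ :=
    Subgroup.commutator_le.2 fun x _ y _ => commutator_mem_band₂ x y
  have h₂ : (⊤ : Subgroup (UT₅ R)).lowerCentralSeries 2 ≤ band₃ :=
    Subgroup.commutator_le.2 fun _ hx y _ => commutator_mem_band₃ (h₁ hx) y
  have h₃ : (⊤ : Subgroup (UT₅ R)).lowerCentralSeries 3 ≤ band₄ :=
    Subgroup.commutator_le.2 fun _ hx y _ => commutator_mem_band₄ (h₂ hx) y
  exact eq_bot_iff.2 <| Subgroup.commutator_le.2 fun _ hx y _ =>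
    commutatorElement_eq_one_iff_commute.2 (commute_of_mem_band₄ (h₃ hx) y)

def ofSuperdiag (a b c d : R) : UT₅ R := ⟨a, b, c, d, 0, 0, 0, 0, 0, 0⟩

end UT₅

theorem FreeGroup.lift_comp_wuLetter {G : Type*} [Group G] {n : ℕ} (g : Fin n → G) :
    FreeGroup.lift g ∘ wuLetter n = Fin.cases ((List.ofFn g).prod)⁻¹ g := by
  funext i
  cases i using Fin.cases <;> simp [wuLetter, map_list_prod, List.map_ofFn, Function.comp_def]

def hopfDetectorGen : Fin 3 → UT₅ (ZMod 2) :=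
  ![UT₅.ofSuperdiag 0 1 0 1, UT₅.ofSuperdiag 0 1 1 0, UT₅.ofSuperdiag 1 1 0 1]

def hopfDetectorLetter : Fin 4 → UT₅ (ZMod 2) :=
  Fin.cases ((List.ofFn hopfDetectorGen).prod)⁻¹ hopfDetectorGen

theorem lift_hopfDetectorGen_comp_wuLetter :
    FreeGroup.lift hopfDetectorGen ∘ wuLetter 3 = hopfDetectorLetter :=
  FreeGroup.lift_comp_wuLetter hopfDetectorGen

set_option maxRecDepth 2000 in
theorem leftNormedCommutator_hopfDetectorLetter_of_length_four (z p q r : Fin 4 × Bool)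
    (hcover : ∀ i, i ∈ [z.1, p.1, q.1, r.1]) :
    leftNormedCommutator (signedLetter hopfDetectorLetter z)
      ([p, q, r].map (signedLetter hopfDetectorLetter)) = 1 := by
  revert z p q r
  decide

theorem fatCommutator_hopfDetectorLetter_eq_bot : fatCommutator hopfDetectorLetter = ⊥ := by
  refine eq_bot_iff.2 (Subgroup.normalClosure_le_normal ?_)
  rintro _ ⟨z, l, hcover, rfl⟩
  have hlen : 4 ≤ l.length + 1 := by
    simpa using Fintype.card_le_length_of_forall_mem hcover
  rcases l with _ | ⟨p, _ | ⟨q, _ | ⟨r, _ | ⟨s, rest⟩⟩⟩⟩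
  iterate 3 simp at hlen
  · exact leftNormedCommutator_hopfDetectorLetter_of_length_four z p q r (by simpa using hcover)
  · exact leftNormedCommutator_eq_one UT₅.lowerCentralSeries_four_eq_bot _ (by simp)

theorem lift_hopfDetectorGen_commutator_ne_one :
    FreeGroup.lift hopfDetectorGen ⁅⁅y 0, y 1⁆, ⁅y 0, y 1 * y 2⁆⁆ ≠ 1 := by
  simp only [map_commutatorElement, map_mul, FreeGroup.lift_apply_of]
  decide

/-- in the free group `F` on `y₀, y₁, y₂`, with `y₋₁ = (y₀y₁y₂)⁻¹`, the
element `[[y₀,y₁], [y₀, y₁y₂]]` does not lie in `[[y₋₁, y₀, y₁, y₂]]`.  (It corresponds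
to the composite `S⁴ → S³ → S²` of suspended Hopf maps, a generator of `π₄(S²) ≅ ℤ/2`.) -/
theorem hopf_comp_not_mem :
    ⁅⁅y 0, y 1⁆, ⁅y 0, y 1 * y 2⁆⁆ ∉ fatCommutator (wuLetter 3) := by
  intro hmem
  have himage := fatCommutator_le_comap (FreeGroup.lift hopfDetectorGen) (wuLetter 3) hmem
  rw [Subgroup.mem_comap, lift_hopfDetectorGen_comp_wuLetter,
    fatCommutator_hopfDetectorLetter_eq_bot, Subgroup.mem_bot] at himage
  exact lift_hopfDetectorGen_commutator_ne_one himage
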